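/- arXiv:2604.24754 — 3 statements merged into one kernel-verified Lean document; each statement's English description precedes it below -/
import Mathlib

section
/- For every complex s with Re s > log N / log b and every integer m ≥ 1, the moments satisfy the recurrence u_m(s) = (b^{m+s} − N)^{−1} Σ_{j=1}^m C(m,j) (Σ_{a∈A} a^j) u_{m−j}(s), where C(m,j) is the binomial coefficient. -/
/-!
A digit tuple of length `l + 1` is a first digit `a₀` followed by a tuple of value `x`, and its
value is `(a₀ + x) / b`. Expanding `((a₀ + x) / b)^m` binomially gives a recurrence in `l` for the
level sums `S_m(l) = Σ_{a ∈ A^l} val(a)^m`. Since `u_m(s) = Σ_l S_m(l) z^l` with `z = b^{-s}` and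
`S_m(l) ≤ N^l`, the series converge absolutely when `N |z| < 1`, which is the condition on `Re s`.
Summing the recurrence over `l` gives `u_m = b^{-(m+s)} Σ_{j=0}^m C(m,j) p_j u_{m-j}` with
`p_j = Σ_{a ∈ A} a^j`; the `j = 0` term is `N u_m`, and `b^{m+s} ≠ N` because `|b^{m+s}| > N`.
-/

open Finset

noncomputable section

def digitVal (b l : ℕ) (a : Fin l → ℕ) : ℝ :=
  ∑ i : Fin l, (a i : ℝ) / (b : ℝ) ^ ((i : ℕ) + 1)

def tuples (A : Finset ℕ) (l : ℕ) : Finset (Fin l → ℕ) :=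
  Fintype.piFinset fun _ => A

-- The `l = 0` term is the paper's `0^m`, the empty tuple having value `0`.
def moment (b : ℕ) (A : Finset ℕ) (s : ℂ) (m : ℕ) : ℂ :=
  ∑' l : ℕ, ∑ a ∈ tuples A l, ((digitVal b l a ^ m : ℝ) : ℂ) * (b : ℂ) ^ (-(l : ℂ) * s)

def digitPowerSum (b : ℕ) (A : Finset ℕ) (m l : ℕ) : ℝ :=
  ∑ a ∈ tuples A l, digitVal b l a ^ m

theorem digitVal_zero (b : ℕ) (a : Fin 0 → ℕ) : digitVal b 0 a = 0 := by
  simp [digitVal]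

theorem digitVal_cons (b l a₀ : ℕ) (a : Fin l → ℕ) :
    digitVal b (l + 1) (Fin.cons a₀ a) = ((a₀ : ℝ) + digitVal b l a) / b := by
  simp only [digitVal, Fin.sum_univ_succ, Fin.cons_zero, Fin.cons_succ, Fin.val_zero,
    Fin.val_succ, add_div, sum_div, div_div, pow_succ, pow_zero, one_mul]

theorem digitVal_nonneg (b l : ℕ) (a : Fin l → ℕ) : 0 ≤ digitVal b l a :=
  sum_nonneg fun _ _ => by positivity

theorem digitVal_le_one {b l : ℕ} {a : Fin l → ℕ} (h : ∀ i, a i < b) : digitVal b l a ≤ 1 := by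
  induction l with
  | zero => simp [digitVal_zero]
  | succ l ih =>
    have hb : (0 : ℝ) < b := by exact_mod_cast (h 0).pos
    have htail : digitVal b l (Fin.tail a) ≤ 1 := ih fun i => h i.succ
    have hhead : (a 0 : ℝ) + 1 ≤ b := by exact_mod_cast h 0
    rw [← Fin.cons_self_tail a, digitVal_cons, div_le_one hb]
    linarith

theorem sum_tuples_succ {M : Type*} [AddCommMonoid M] (A : Finset ℕ) (l : ℕ)
    (f : (Fin (l + 1) → ℕ) → M) :
    ∑ a ∈ tuples A (l + 1), f a = ∑ a₀ ∈ A, ∑ a ∈ tuples A l, f (Fin.cons a₀ a) := by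
  rw [← sum_product']
  exact (sum_equiv (Fin.consEquiv fun _ => ℕ)
    (fun _ => by simp [tuples, Fin.forall_fin_succ]) (fun _ _ => rfl)).symm

theorem card_tuples (A : Finset ℕ) (l : ℕ) : #(tuples A l) = #A ^ l := by
  simp [tuples]

theorem digitPowerSum_zero (b : ℕ) (A : Finset ℕ) {m : ℕ} (hm : m ≠ 0) :
    digitPowerSum b A m 0 = 0 := by
  simp [digitPowerSum, digitVal_zero, hm]

theorem digitPowerSum_succ (b : ℕ) (A : Finset ℕ) (m l : ℕ) :
    digitPowerSum b A m (l + 1) = ((b : ℝ) ^ m)⁻¹ * ∑ j ∈ range (m + 1),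
      (m.choose j : ℝ) * (∑ a ∈ A, (a : ℝ) ^ j) * digitPowerSum b A (m - j) l := by
  simp only [digitPowerSum, sum_tuples_succ, digitVal_cons, div_pow, add_pow, sum_div, mul_sum,
    sum_mul]
  rw [sum_comm]
  conv_rhs => rw [sum_comm]
  refine sum_congr rfl fun t _ => ?_
  rw [sum_comm]
  refine sum_congr rfl fun j _ => sum_congr rfl fun a _ => ?_
  ring

theorem digitPowerSum_nonneg (b : ℕ) (A : Finset ℕ) (m l : ℕ) : 0 ≤ digitPowerSum b A m l :=
  sum_nonneg fun a _ => pow_nonneg (digitVal_nonneg b l a) m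

theorem digitPowerSum_le_card_pow {b : ℕ} {A : Finset ℕ} (hAb : A ⊆ range b) (m l : ℕ) :
    digitPowerSum b A m l ≤ (#A : ℝ) ^ l := by
  calc digitPowerSum b A m l ≤ ∑ _a ∈ tuples A l, (1 : ℝ) := by
        refine sum_le_sum fun a ha => pow_le_one₀ (digitVal_nonneg b l a) (digitVal_le_one ?_)
        intro i
        simpa using hAb (Fintype.mem_piFinset.1 ha i)
    _ = (#A : ℝ) ^ l := by simp [card_tuples]

theorem moment_eq_tsum (b : ℕ) (A : Finset ℕ) (s : ℂ) (m : ℕ) :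
    moment b A s m = ∑' l, (digitPowerSum b A m l : ℂ) * ((b : ℂ) ^ (-s)) ^ l := by
  refine tsum_congr fun l => ?_
  rw [neg_mul, ← mul_neg, Complex.cpow_nat_mul, digitPowerSum, Complex.ofReal_sum, sum_mul]

theorem summable_digitPowerSum_mul_pow {b : ℕ} {A : Finset ℕ} (hAb : A ⊆ range b) (m : ℕ)
    {z : ℂ} (hz : #A * ‖z‖ < 1) :
    Summable fun l => (digitPowerSum b A m l : ℂ) * z ^ l := by
  refine .of_norm_bounded (summable_geometric_of_lt_one (by positivity) hz) fun l => ?_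
  rw [norm_mul, norm_pow, Complex.norm_real, Real.norm_of_nonneg (digitPowerSum_nonneg b A m l),
    mul_pow]
  exact mul_le_mul_of_nonneg_right (digitPowerSum_le_card_pow hAb m l) (by positivity)

theorem moment_eq_cpow_mul_sum {b : ℕ} {A : Finset ℕ} (hAb : A ⊆ range b) {s : ℂ}
    (hs : #A * ‖(b : ℂ) ^ (-s)‖ < 1) {m : ℕ} (hm : m ≠ 0) :
    moment b A s m = ((b : ℂ) ^ m)⁻¹ * (b : ℂ) ^ (-s) * ∑ j ∈ range (m + 1),
      (m.choose j : ℂ) * (∑ a ∈ A, (a : ℂ) ^ j) * moment b A s (m - j) := by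
  set z := (b : ℂ) ^ (-s)
  have hsum : ∀ k, Summable fun l => (digitPowerSum b A k l : ℂ) * z ^ l :=
    fun k => summable_digitPowerSum_mul_pow hAb k hs
  calc moment b A s m = ∑' l, (digitPowerSum b A m (l + 1) : ℂ) * z ^ (l + 1) := by
        rw [moment_eq_tsum, (hsum m).tsum_eq_zero_add, digitPowerSum_zero b A hm]
        simp
    _ = ∑' l, ∑ j ∈ range (m + 1), ((b : ℂ) ^ m)⁻¹ * z *
          ((m.choose j : ℂ) * (∑ a ∈ A, (a : ℂ) ^ j) *
            ((digitPowerSum b A (m - j) l : ℂ) * z ^ l)) :=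
        tsum_congr fun l => by
          rw [digitPowerSum_succ]
          push_cast
          rw [mul_sum, sum_mul]
          exact sum_congr rfl fun j _ => by ring
    _ = ∑ j ∈ range (m + 1), ∑' l, ((b : ℂ) ^ m)⁻¹ * z *
          ((m.choose j : ℂ) * (∑ a ∈ A, (a : ℂ) ^ j) *
            ((digitPowerSum b A (m - j) l : ℂ) * z ^ l)) :=
        Summable.tsum_finsetSum fun j _ => ((hsum (m - j)).mul_left _).mul_left _
    _ = _ := by simp only [mul_sum, moment_eq_tsum, tsum_mul_left, z]

theorem lt_rpow_of_log_div_log_lt {N b x : ℝ} (hN : 0 ≤ N) (hb : 1 < b)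
    (h : Real.log N / Real.log b < x) : N < b ^ x := by
  rcases hN.eq_or_lt with rfl | hN
  · positivity
  rw [Real.lt_rpow_iff_log_lt hN (by linarith), ← div_lt_iff₀ (Real.log_pos hb)]
  exact h

theorem mul_norm_natCast_cpow_neg_lt_one {N b : ℕ} (hb : 0 < b) {s : ℂ}
    (h : (N : ℝ) < (b : ℝ) ^ s.re) : N * ‖(b : ℂ) ^ (-s)‖ < 1 := by
  rwa [Complex.norm_natCast_cpow_of_pos hb, Complex.neg_re, Real.rpow_neg (by positivity),
    ← div_eq_mul_inv, div_lt_one (by positivity)]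

theorem natCast_cpow_natCast_add_ne {N b : ℕ} (hb : 1 < b) {s : ℂ}
    (h : (N : ℝ) < (b : ℝ) ^ s.re) (m : ℕ) : (b : ℂ) ^ ((m : ℂ) + s) ≠ N := by
  intro heq
  have hnorm := congrArg norm heq
  rw [Complex.norm_natCast_cpow_of_pos (by omega), Complex.norm_natCast] at hnorm
  refine h.not_ge (hnorm ▸ Real.rpow_le_rpow_of_exponent_le ?_ ?_)
  · exact_mod_cast hb.le
  · simp

theorem moment_recurrence_general
    (b : ℕ) (hb : 2 ≤ b) (A : Finset ℕ) (hAb : A ⊆ Finset.range b)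
    (s : ℂ) (hs : Real.log A.card / Real.log b < s.re) (m : ℕ) (hm : 1 ≤ m) :
    moment b A s m = ((b : ℂ) ^ ((m : ℂ) + s) - (A.card : ℂ))⁻¹ *
      ∑ j ∈ Finset.Icc 1 m, (m.choose j : ℂ) * (∑ a ∈ A, (a : ℂ) ^ j) * moment b A s (m - j) := by
  have hN : (#A : ℝ) < (b : ℝ) ^ s.re :=
    lt_rpow_of_log_div_log_lt (Nat.cast_nonneg _) (by exact_mod_cast hb) hs
  have h := moment_eq_cpow_mul_sum hAb (mul_norm_natCast_cpow_neg_lt_one (by omega) hN)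
    (by omega : m ≠ 0)
  have hB : ((b : ℂ) ^ m)⁻¹ * (b : ℂ) ^ (-s) = ((b : ℂ) ^ ((m : ℂ) + s))⁻¹ := by
    rw [Complex.cpow_neg, ← mul_inv, Complex.cpow_add _ _ (by exact_mod_cast (by omega : b ≠ 0)),
      Complex.cpow_natCast]
  rw [hB, Nat.range_succ_eq_Icc_zero, ← add_sum_Ioc_eq_sum_Icc (Nat.zero_le m),
    ← Icc_add_one_left_eq_Ioc] at h
  simp only [Nat.choose_zero_right, pow_zero, sum_const, nsmul_one, Nat.sub_zero, Nat.cast_one,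
    one_mul, zero_add] at h
  have hB0 : (b : ℂ) ^ ((m : ℂ) + s) ≠ 0 := by simp [Complex.cpow_eq_zero_iff]; omega
  rw [eq_inv_mul_iff_mul_eq₀ (sub_ne_zero.2 (natCast_cpow_natCast_add_ne (by omega) hN m))]
  rw [eq_inv_mul_iff_mul_eq₀ hB0] at h
  linear_combination h

/-- For Re s > log N / log b and m ≥ 1,
u_m(s) = (b^{m+s} − N)⁻¹ Σ_{j=1}^m C(m,j) (Σ_{a∈A} a^j) u_{m−j}(s). -/
theorem moment_recurrence
    (b : ℕ) (hb : 2 ≤ b) (A : Finset ℕ) (hA : A.Nonempty) (hAb : A ⊆ Finset.range b)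
    (hf : 0 < A.max' hA)
    (s : ℂ) (hs : Real.log A.card / Real.log b < s.re) (m : ℕ) (hm : 1 ≤ m) :
    moment b A s m = ((b : ℂ) ^ ((m : ℂ) + s) - (A.card : ℂ))⁻¹ *
      ∑ j ∈ Finset.Icc 1 m, (m.choose j : ℂ) * (∑ a ∈ A, (a : ℂ) ^ j) * moment b A s (m - j) :=
  moment_recurrence_general b hb A hAb s hs m hm
end
end

section
/- Assume f = max A = b−1 and let s be a complex number with Re s > log N / log b. Then for every real m > 0: γ_B(−m) · e^{−m} E(m) = Σ_{l=0}^∞ γ_B(−m b^{−l}) e^{−m b^{−l}} b^{−ls}. -/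
/-!
Reflecting the digits, `B = (b - 1) - A`, gives `α_A(t) = e^{(b-1)t} α_B(-t)`, while the
infinite product satisfies `γ_B(-t/b) = α_B(-t/b) γ_B(-t)`. Together they say that
`γ_B(-t) e^{-t}` is multiplied by `α_A(t/b)` when `t` is replaced by `t/b`. The level-`l` part of
`E(m)` factors as `∏_{i<l} α_A(m b^{-i-1})`, so multiplying it by `γ_B(-m) e^{-m}` telescopes to
`γ_B(-m b^{-l}) e^{-m b^{-l}}`: the identity holds term by term in `l`.
-/

open Finset

noncomputable section

/-- E(t) = 1 + Σ_{l≥1} Σ_{(a₁,…,a_l)∈A^l} e^{t(a₁/b+⋯+a_l/b^l)} b^{−ls}. -/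
def egf (b : ℕ) (A : Finset ℕ) (s : ℂ) (t : ℝ) : ℂ :=
  ∑' l : ℕ, ∑ a ∈ tuples A l, ((Real.exp (t * digitVal b l a) : ℝ) : ℂ) * (b : ℂ) ^ (-(l : ℂ) * s)

/-- α_B(t) = Σ_{d∈B} e^{dt}. -/
def alphaB (B : Finset ℕ) (t : ℝ) : ℝ := ∑ d ∈ B, Real.exp (d * t)

/-- γ_B(−t) = Π_{i≥0} α_B(−b^i t), as a function of t. -/
def gammaNeg (b : ℕ) (B : Finset ℕ) (t : ℝ) : ℝ := ∏' i : ℕ, alphaB B (-((b : ℝ) ^ i * t))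

lemma alphaB_eq_one_add_sum_erase {B : Finset ℕ} (h0 : 0 ∈ B) (t : ℝ) :
    alphaB B t = 1 + ∑ d ∈ B.erase 0, Real.exp (d * t) := by
  rw [alphaB, ← add_sum_erase _ _ h0, Nat.cast_zero, zero_mul, Real.exp_zero]

lemma multipliable_alphaB_neg_pow_mul {b : ℕ} (hb : 2 ≤ b) {B : Finset ℕ} (h0 : 0 ∈ B)
    {t : ℝ} (ht : 0 < t) : Multipliable fun i : ℕ => alphaB B (-((b : ℝ) ^ i * t)) := by
  simp_rw [alphaB_eq_one_add_sum_erase h0]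
  refine Real.multipliable_one_add_of_summable (summable_sum fun d hd => ?_)
  have hd : (0 : ℝ) < d := by exact_mod_cast Nat.pos_of_ne_zero (ne_of_mem_erase hd)
  have hpow (i : ℕ) : (i : ℝ) ≤ (b : ℝ) ^ i := by exact_mod_cast (Nat.lt_pow_self hb).le
  refine (Real.summable_exp_nat_mul_of_ge (neg_neg_of_pos (mul_pos hd ht)) hpow).congr
    fun i => ?_
  ring_nf

lemma gammaNeg_div_natCast {b : ℕ} (hb : b ≠ 0) {B : Finset ℕ} {t : ℝ}
    (hmul : Multipliable fun i : ℕ => alphaB B (-((b : ℝ) ^ i * t))) :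
    gammaNeg b B (t / b) = alphaB B (-(t / b)) * gammaNeg b B t := by
  have hshift (i : ℕ) : (b : ℝ) ^ (i + 1) * (t / b) = (b : ℝ) ^ i * t := by
    field_simp
    ring
  rw [gammaNeg, tprod_eq_zero_mul' (by simpa only [hshift] using hmul), pow_zero, one_mul,
    gammaNeg]
  simp only [hshift]

lemma alphaB_eq_exp_mul_alphaB_image_sub {A : Finset ℕ} {f : ℕ} (hA : ∀ a ∈ A, a ≤ f)
    (t : ℝ) : alphaB A t = Real.exp (f * t) * alphaB (A.image (f - ·)) (-t) := by
  have hinj : Set.InjOn (f - ·) A := fun a ha a' ha' h => by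
    have := hA a ha
    have := hA a' ha'
    simp only at h
    omega
  rw [alphaB, alphaB, sum_image hinj, mul_sum]
  refine sum_congr rfl fun a ha => ?_
  rw [← Real.exp_add, Nat.cast_sub (hA a ha)]
  ring_nf

lemma sum_tuples_exp_mul_digitVal (b : ℕ) (A : Finset ℕ) (m : ℝ) (l : ℕ) :
    ∑ a ∈ tuples A l, Real.exp (m * digitVal b l a)
      = ∏ i ∈ range l, alphaB A (m / (b : ℝ) ^ (i + 1)) := by
  rw [← Fin.prod_univ_eq_prod_range (fun i => alphaB A (m / (b : ℝ) ^ (i + 1))) l]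
  simp only [alphaB]
  rw [prod_univ_sum, tuples]
  refine sum_congr rfl fun a _ => ?_
  rw [digitVal, mul_sum, Real.exp_sum]
  refine prod_congr rfl fun i _ => ?_
  ring_nf

lemma gammaNeg_mul_exp_div {b : ℕ} (hb : 2 ≤ b) {A : Finset ℕ} (hAb : A ⊆ range b)
    (hbA : b - 1 ∈ A) {t : ℝ} (ht : 0 < t) :
    gammaNeg b (A.image fun a => b - 1 - a) (t / b) * Real.exp (-(t / b))
      = gammaNeg b (A.image fun a => b - 1 - a) t * Real.exp (-t) * alphaB A (t / b) := by
  have h0 : 0 ∈ A.image fun a => b - 1 - a := mem_image.mpr ⟨b - 1, hbA, Nat.sub_self _⟩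
  have hA (a : ℕ) (ha : a ∈ A) : a ≤ b - 1 := Nat.le_sub_one_of_lt (mem_range.mp (hAb ha))
  have hexp :
      Real.exp (-(t / b)) = Real.exp (-t) * Real.exp (((b - 1 : ℕ) : ℝ) * (t / b)) := by
    rw [← Real.exp_add, Nat.cast_sub (by omega), Nat.cast_one]
    congr 1
    field_simp
    ring
  rw [gammaNeg_div_natCast (by omega) (multipliable_alphaB_neg_pow_mul hb h0 ht),
    alphaB_eq_exp_mul_alphaB_image_sub hA, hexp]
  ring

lemma gammaNeg_mul_exp_mul_prod_alphaB {b : ℕ} (hb : 2 ≤ b) {A : Finset ℕ}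
    (hAb : A ⊆ range b) (hbA : b - 1 ∈ A) {m : ℝ} (hm : 0 < m) (l : ℕ) :
    gammaNeg b (A.image fun a => b - 1 - a) m * Real.exp (-m)
        * ∏ i ∈ range l, alphaB A (m / (b : ℝ) ^ (i + 1))
      = gammaNeg b (A.image fun a => b - 1 - a) (m / (b : ℝ) ^ l)
        * Real.exp (-(m / (b : ℝ) ^ l)) := by
  induction l with
  | zero => simp
  | succ l ih =>
    have ht : 0 < m / (b : ℝ) ^ l := by positivity
    rw [prod_range_succ, ← mul_assoc, ih, pow_succ, ← div_div,
      gammaNeg_mul_exp_div hb hAb hbA ht]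

theorem gammaB_egf_expansion_general
    (b : ℕ) (hb : 2 ≤ b) (A : Finset ℕ) (hAb : A ⊆ Finset.range b)
    (hbA : b - 1 ∈ A)
    (s : ℂ) (m : ℝ) (hm : 0 < m) :
    ((gammaNeg b (A.image fun a => b - 1 - a) m : ℝ) : ℂ) *
        ((Real.exp (-m) : ℝ) : ℂ) * egf b A s m
      = ∑' l : ℕ,
          ((gammaNeg b (A.image fun a => b - 1 - a) (m * (b : ℝ) ^ (-(l : ℤ))) : ℝ) : ℂ) *
            ((Real.exp (-(m * (b : ℝ) ^ (-(l : ℤ)))) : ℝ) : ℂ) * (b : ℂ) ^ (-(l : ℂ) * s) := by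
  rw [egf, ← tsum_mul_left]
  refine tsum_congr fun l => ?_
  have hlevel := gammaNeg_mul_exp_mul_prod_alphaB hb hAb hbA hm l
  rw [← sum_tuples_exp_mul_digitVal] at hlevel
  rw [zpow_neg, zpow_natCast, ← div_eq_mul_inv, ← sum_mul, ← mul_assoc]
  congr 1
  exact_mod_cast hlevel

/-- Assume max A = b−1, Re s > log N / log b.  For every m > 0,
γ_B(−m) e^{−m} E(m) = Σ_{l≥0} γ_B(−mb^{−l}) e^{−mb^{−l}} b^{−ls}. -/
theorem gammaB_egf_expansion
    (b : ℕ) (hb : 2 ≤ b) (A : Finset ℕ) (hA : A.Nonempty) (hAb : A ⊆ Finset.range b)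
    (hbA : b - 1 ∈ A)
    (s : ℂ) (hs : Real.log A.card / Real.log b < s.re) (m : ℝ) (hm : 0 < m) :
    ((gammaNeg b (A.image fun a => b - 1 - a) m : ℝ) : ℂ) *
        ((Real.exp (-m) : ℝ) : ℂ) * egf b A s m
      = ∑' l : ℕ,
          ((gammaNeg b (A.image fun a => b - 1 - a) (m * (b : ℝ) ^ (-(l : ℤ))) : ℝ) : ℂ) *
            ((Real.exp (-(m * (b : ℝ) ^ (-(l : ℤ)))) : ℝ) : ℂ) * (b : ℂ) ^ (-(l : ℂ) * s) :=
  gammaB_egf_expansion_general b hb A hAb hbA s m hm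
end
end

section
/- Assume f = max A = b−1 and let s be a complex number with Re s > log N / log b. For real m > 0 define F_s(m) = m^s Σ_{l=−∞}^{∞} γ_B(−b^{−l} m) e^{−m b^{−l}} b^{−ls}. Then this bilateral series converges absolutely for every m > 0, and F_s(bm) = F_s(m) for all m > 0; i.e., F_s is a 1-periodic function of log_b(m). -/
/-!
Write `N = #B ≤ #A`. The functional equation `γ(t) = α(-t) γ(bt)` with `1 ≤ α(-t) ≤ N` gives
`γ(b⁻ⁿ m) ≤ Nⁿ γ(m)`, so for `l = n ≥ 0` the terms are dominated by the geometric series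
`γ(m) (N / b^{Re s})ⁿ`, which converges exactly because `Re s > log N / log b`. For `l = -n`,
`γ` is decreasing and `e^{-m bⁿ}` beats `b^{n Re s}`. Periodicity needs no convergence: replacing
`m` by `bm` turns the `l`-th term into the `(l - 1)`-th one times `b^{-s}`, which `(bm)^s`
compensates.
-/

open Finset

noncomputable section

/-- The l-th term (l ∈ ℤ) of the bilateral series defining F_s(m), without the m^s factor:
γ_B(−b^{−l}m) e^{−mb^{−l}} b^{−ls}. -/
def FsTerm (b : ℕ) (B : Finset ℕ) (s : ℂ) (m : ℝ) (l : ℤ) : ℂ :=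
  ((gammaNeg b B ((b : ℝ) ^ (-l) * m) : ℝ) : ℂ) *
    ((Real.exp (-(m * (b : ℝ) ^ (-l))) : ℝ) : ℂ) * (b : ℂ) ^ (-(l : ℂ) * s)

/-- F_s(m) = m^s Σ_{l∈ℤ} γ_B(−b^{−l}m) e^{−mb^{−l}} b^{−ls}. -/
def Fs (b : ℕ) (B : Finset ℕ) (s : ℂ) (m : ℝ) : ℂ :=
  (m : ℂ) ^ s * ∑' l : ℤ, FsTerm b B s m l

open Real Filter

variable {b : ℕ} {B : Finset ℕ}

lemma one_le_alphaB (hB : 0 ∈ B) (u : ℝ) : 1 ≤ alphaB B u := by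
  simpa [alphaB] using
    single_le_sum (f := fun d : ℕ => exp (d * u)) (fun d _ => (exp_pos _).le) hB

lemma alphaB_pos (hB : 0 ∈ B) (u : ℝ) : 0 < alphaB B u :=
  one_pos.trans_le (one_le_alphaB hB u)

lemma alphaB_mono : Monotone (alphaB B) := fun _ _ huv =>
  sum_le_sum fun d _ => exp_le_exp.mpr (mul_le_mul_of_nonneg_left huv d.cast_nonneg)

lemma alphaB_le_card {u : ℝ} (hu : u ≤ 0) : alphaB B u ≤ #B := by
  simpa [alphaB] using sum_le_card_nsmul B _ 1 fun d _ =>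
    exp_le_one_iff.mpr (mul_nonpos_of_nonneg_of_nonpos d.cast_nonneg hu)

lemma alphaB_neg_sub_one_le (hB : 0 ∈ B) {u : ℝ} (hu : 0 ≤ u) :
    alphaB B (-u) - 1 ≤ #B * exp (-u) := by
  have hsplit : alphaB B (-u) = 1 + ∑ d ∈ B.erase 0, exp (d * -u) := by
    rw [alphaB, ← add_sum_erase _ _ hB]
    simp
  have hterm : ∀ d ∈ B.erase 0, exp (d * -u) ≤ exp (-u) := fun d hd => by
    have hd : (1 : ℝ) ≤ d := mod_cast Nat.one_le_iff_ne_zero.mpr (ne_of_mem_erase hd)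
    exact exp_le_exp.mpr (by nlinarith)
  have hcard : ((B.erase 0).card : ℝ) ≤ #B := mod_cast card_erase_le
  have hsum := sum_le_card_nsmul _ _ _ hterm
  rw [nsmul_eq_mul] at hsum
  nlinarith [exp_pos (-u)]

lemma summable_log_alphaB (hb : 1 < b) (hB : 0 ∈ B) {t : ℝ} (ht : 0 < t) :
    Summable fun i : ℕ => log (alphaB B (-((b : ℝ) ^ i * t))) := by
  refine .of_nonneg_of_le (fun i => log_nonneg (one_le_alphaB hB _)) (fun i => ?_)
    ((summable_exp_nat_mul_of_ge (neg_lt_zero.mpr ht)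
      (f := fun i : ℕ => (b : ℝ) ^ i) fun i => mod_cast (Nat.lt_pow_self hb).le).mul_left (#B : ℝ))
  calc log (alphaB B (-((b : ℝ) ^ i * t)))
      ≤ alphaB B (-((b : ℝ) ^ i * t)) - 1 := log_le_sub_one_of_pos (alphaB_pos hB _)
    _ ≤ #B * exp (-((b : ℝ) ^ i * t)) := alphaB_neg_sub_one_le hB (by positivity)
    _ = #B * exp (-t * (b : ℝ) ^ i) := by ring_nf

lemma gammaNeg_eq_exp_tsum_log (hb : 1 < b) (hB : 0 ∈ B) {t : ℝ} (ht : 0 < t) :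
    gammaNeg b B t = exp (∑' i : ℕ, log (alphaB B (-((b : ℝ) ^ i * t)))) :=
  (rexp_tsum_eq_tprod (fun _ => alphaB_pos hB _) (summable_log_alphaB hb hB ht)).symm

lemma gammaNeg_pos (hb : 1 < b) (hB : 0 ∈ B) {t : ℝ} (ht : 0 < t) : 0 < gammaNeg b B t := by
  rw [gammaNeg_eq_exp_tsum_log hb hB ht]
  exact exp_pos _

lemma gammaNeg_eq_alphaB_mul (hb : 1 < b) (hB : 0 ∈ B) {t : ℝ} (ht : 0 < t) :
    gammaNeg b B t = alphaB B (-t) * gammaNeg b B (b * t) := by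
  have hshift : (fun i : ℕ => alphaB B (-((b : ℝ) ^ (i + 1) * t)))
      = fun i : ℕ => alphaB B (-((b : ℝ) ^ i * (b * t))) := by
    ext i
    rw [pow_succ, mul_assoc]
  have hmul : Multipliable fun i : ℕ => alphaB B (-((b : ℝ) ^ (i + 1) * t)) := by
    rw [hshift]
    exact multipliable_of_summable_log (fun _ => alphaB_pos hB _)
      (summable_log_alphaB hb hB (by positivity))
  unfold gammaNeg
  rw [tprod_eq_zero_mul' (f := fun i : ℕ => alphaB B (-((b : ℝ) ^ i * t))) hmul, hshift,
    pow_zero, one_mul]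

lemma gammaNeg_antitoneOn (hb : 1 < b) (hB : 0 ∈ B) : AntitoneOn (gammaNeg b B) (Set.Ioi 0) := by
  intro t ht u hu htu
  rw [gammaNeg_eq_exp_tsum_log hb hB ht, gammaNeg_eq_exp_tsum_log hb hB hu]
  refine exp_le_exp.mpr (Summable.tsum_le_tsum (fun i => ?_) (summable_log_alphaB hb hB hu)
    (summable_log_alphaB hb hB ht))
  refine log_le_log (alphaB_pos hB _) (alphaB_mono ?_)
  have : (b : ℝ) ^ i * t ≤ (b : ℝ) ^ i * u := by gcongr
  linarith

lemma gammaNeg_le_card_pow_mul (hb : 1 < b) (hB : 0 ∈ B) (n : ℕ) {t : ℝ} (ht : 0 < t) :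
    gammaNeg b B t ≤ (#B : ℝ) ^ n * gammaNeg b B ((b : ℝ) ^ n * t) := by
  induction n generalizing t with
  | zero => simp
  | succ n ih =>
    have hbt : (0 : ℝ) < b * t := by positivity
    calc gammaNeg b B t = alphaB B (-t) * gammaNeg b B (b * t) := gammaNeg_eq_alphaB_mul hb hB ht
      _ ≤ #B * ((#B : ℝ) ^ n * gammaNeg b B ((b : ℝ) ^ n * (b * t))) :=
          mul_le_mul (alphaB_le_card (by linarith)) (ih hbt) (gammaNeg_pos hb hB hbt).le
            (by positivity)
      _ = (#B : ℝ) ^ (n + 1) * gammaNeg b B ((b : ℝ) ^ (n + 1) * t) := by ring_nf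

lemma summable_exp_neg_mul_pow_mul_pow {r : ℝ} (hr : 1 < r) {m : ℝ} (hm : 0 < m) (K : ℝ) :
    Summable fun n : ℕ => exp (-(m * r ^ n)) * K ^ n := by
  have hratio : Tendsto (fun n : ℕ => |K| * exp (-(m * r ^ n * (r - 1)))) atTop (nhds 0) := by
    simpa using (tendsto_exp_atBot.comp (tendsto_neg_atTop_atBot.comp
      (((tendsto_pow_atTop_atTop_of_one_lt hr).const_mul_atTop hm).atTop_mul_const
        (sub_pos.mpr hr)))).const_mul |K|
  refine summable_of_ratio_norm_eventually_le (r := 1 / 2) (by norm_num) ?_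
  filter_upwards [hratio.eventually_lt_const (by norm_num : (0 : ℝ) < 1 / 2)] with n hn
  have hstep : exp (-(m * r ^ (n + 1))) * K ^ (n + 1)
      = exp (-(m * r ^ n)) * K ^ n * (K * exp (-(m * r ^ n * (r - 1)))) := by
    rw [show -(m * r ^ (n + 1)) = -(m * r ^ n) + -(m * r ^ n * (r - 1)) by ring, exp_add]
    ring
  rw [hstep, norm_mul, mul_comm]
  gcongr
  rw [norm_mul, norm_eq_abs, norm_of_nonneg (exp_nonneg _)]
  exact hn.le

lemma norm_FsTerm (hb : 1 < b) (hB : 0 ∈ B) {m : ℝ} (hm : 0 < m) (s : ℂ) (l : ℤ) :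
    ‖FsTerm b B s m l‖ = gammaNeg b B ((b : ℝ) ^ (-l) * m) * exp (-(m * (b : ℝ) ^ (-l))) *
      ((b : ℝ) ^ s.re) ^ (-l) := by
  have hb0 : (0 : ℝ) < b := by positivity
  rw [FsTerm, norm_mul, norm_mul, Complex.norm_real, Complex.norm_real,
    Real.norm_of_nonneg (gammaNeg_pos hb hB (by positivity)).le,
    Real.norm_of_nonneg (exp_nonneg _), ← Complex.ofReal_natCast,
    Complex.norm_cpow_eq_rpow_re_of_pos hb0]
  congr 1
  rw [← rpow_intCast, ← rpow_mul hb0.le]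
  simp [mul_comm]

lemma summable_norm_FsTerm_natCast (hb : 1 < b) (hB : 0 ∈ B) {s : ℂ}
    (hs : (#B : ℝ) < (b : ℝ) ^ s.re) {m : ℝ} (hm : 0 < m) :
    Summable fun n : ℕ => ‖FsTerm b B s m n‖ := by
  have hK : 0 < (b : ℝ) ^ s.re := by positivity
  refine .of_nonneg_of_le (fun _ => norm_nonneg _) (fun n => ?_)
    ((summable_geometric_of_lt_one (by positivity) ((div_lt_one hK).mpr hs)).mul_left
      (gammaNeg b B m))
  have harg : (0 : ℝ) < (b : ℝ) ^ (-(n : ℤ)) * m := by positivity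
  have hcancel : (b : ℝ) ^ n * ((b : ℝ) ^ (-(n : ℤ)) * m) = m := by
    rw [zpow_neg, zpow_natCast, ← mul_assoc, mul_inv_cancel₀ (by positivity), one_mul]
  have hgamma := hcancel ▸ gammaNeg_le_card_pow_mul hb hB n harg
  have hexp : exp (-(m * (b : ℝ) ^ (-(n : ℤ)))) ≤ 1 := exp_le_one_iff.mpr (by nlinarith)
  calc ‖FsTerm b B s m n‖
      = gammaNeg b B ((b : ℝ) ^ (-(n : ℤ)) * m) * exp (-(m * (b : ℝ) ^ (-(n : ℤ)))) *
          ((b : ℝ) ^ s.re) ^ (-(n : ℤ)) := norm_FsTerm hb hB hm s n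
    _ ≤ (#B : ℝ) ^ n * gammaNeg b B m * 1 * ((b : ℝ) ^ s.re) ^ (-(n : ℤ)) := by
        gcongr
        exact mul_nonneg (by positivity) (gammaNeg_pos hb hB hm).le
    _ = gammaNeg b B m * (#B / (b : ℝ) ^ s.re) ^ n := by
        rw [zpow_neg, zpow_natCast, div_pow]
        ring

lemma summable_norm_FsTerm_neg_natCast (hb : 1 < b) (hB : 0 ∈ B) (s : ℂ) {m : ℝ} (hm : 0 < m) :
    Summable fun n : ℕ => ‖FsTerm b B s m (-n)‖ := by
  refine .of_nonneg_of_le (fun _ => norm_nonneg _) (fun n => ?_)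
    ((summable_exp_neg_mul_pow_mul_pow (r := b) (mod_cast hb) hm ((b : ℝ) ^ s.re)).mul_left
      (gammaNeg b B m))
  have hmono : gammaNeg b B ((b : ℝ) ^ n * m) ≤ gammaNeg b B m :=
    gammaNeg_antitoneOn hb hB hm (show (0 : ℝ) < b ^ n * m by positivity)
      (le_mul_of_one_le_left hm.le (one_le_pow₀ (mod_cast hb.le)))
  rw [norm_FsTerm hb hB hm, neg_neg, zpow_natCast, zpow_natCast, mul_assoc, mul_comm m]
  gcongr

lemma summable_norm_FsTerm (hb : 1 < b) (hB : 0 ∈ B) {s : ℂ} (hs : (#B : ℝ) < (b : ℝ) ^ s.re)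
    {m : ℝ} (hm : 0 < m) : Summable fun l : ℤ => ‖FsTerm b B s m l‖ :=
  .of_nat_of_neg (summable_norm_FsTerm_natCast hb hB hs hm)
    (summable_norm_FsTerm_neg_natCast hb hB s hm)

lemma FsTerm_natCast_mul (hb : b ≠ 0) (s : ℂ) (m : ℝ) (l : ℤ) :
    FsTerm b B s (b * m) l = FsTerm b B s m (l - 1) * (b : ℂ) ^ (-s) := by
  have hb' : (b : ℝ) ≠ 0 := mod_cast hb
  have hpow : (b : ℝ) ^ (-(l - 1)) = (b : ℝ) ^ (-l) * b := by
    rw [show -(l - 1) = -l + 1 by ring, zpow_add_one₀ hb']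
  have hcpow :
      (b : ℂ) ^ (-(l : ℂ) * s) = (b : ℂ) ^ (-((l - 1 : ℤ) : ℂ) * s) * (b : ℂ) ^ (-s) := by
    rw [← Complex.cpow_add _ _ (mod_cast hb)]
    push_cast
    ring_nf
  rw [FsTerm, FsTerm, hpow, hcpow]
  ring_nf

lemma Fs_natCast_mul (hb : b ≠ 0) (s : ℂ) {m : ℝ} (hm : 0 ≤ m) :
    Fs b B s (b * m) = Fs b B s m := by
  have hsum :
      ∑' l : ℤ, FsTerm b B s (b * m) l = (∑' l : ℤ, FsTerm b B s m l) * (b : ℂ) ^ (-s) := by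
    rw [tsum_congr (FsTerm_natCast_mul hb s m), tsum_mul_right]
    exact congrArg (· * _) ((Equiv.subRight (1 : ℤ)).tsum_eq _)
  have hbs : (b : ℂ) ^ s * (b : ℂ) ^ (-s) = 1 := by
    rw [← Complex.cpow_add _ _ (mod_cast hb), add_neg_cancel, Complex.cpow_zero]
  rw [Fs, Fs, hsum, Complex.ofReal_mul, Complex.mul_cpow_ofReal_nonneg b.cast_nonneg hm,
    Complex.ofReal_natCast]
  linear_combination ((m : ℂ) ^ s * ∑' l : ℤ, FsTerm b B s m l) * hbs

theorem Fs_periodic_general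
    (b : ℕ) (hb : 2 ≤ b) (A : Finset ℕ)
    (hbA : b - 1 ∈ A)
    (s : ℂ) (hs : Real.log A.card / Real.log b < s.re) :
    (∀ m : ℝ, 0 < m →
        Summable (fun l : ℤ => ‖FsTerm b (A.image fun a => b - 1 - a) s m l‖))
    ∧ ∀ m : ℝ, 0 < m →
        Fs b (A.image fun a => b - 1 - a) s ((b : ℝ) * m)
          = Fs b (A.image fun a => b - 1 - a) s m := by
  set B := A.image fun a => b - 1 - a
  have hB : 0 ∈ B := mem_image.mpr ⟨b - 1, hbA, Nat.sub_self _⟩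
  have hcard : (#B : ℝ) < (b : ℝ) ^ s.re := by
    have hlogb : 0 < Real.log b := Real.log_pos (mod_cast hb)
    calc (#B : ℝ) ≤ #A := mod_cast card_image_le
      _ < (b : ℝ) ^ s.re := lt_rpow_of_log_lt (by positivity) (by rwa [div_lt_iff₀ hlogb] at hs)
  exact ⟨fun m hm => summable_norm_FsTerm hb hB hcard hm,
    fun m hm => Fs_natCast_mul (by omega) s hm.le⟩

/-- Assume max A = b−1, Re s > log N / log b.  The bilateral series
defining F_s(m) converges absolutely for every m > 0, and F_s(bm) = F_s(m), i.e. F_s is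
1-periodic in log_b(m). -/
theorem Fs_periodic
    (b : ℕ) (hb : 2 ≤ b) (A : Finset ℕ) (hA : A.Nonempty) (hAb : A ⊆ Finset.range b)
    (hbA : b - 1 ∈ A)
    (s : ℂ) (hs : Real.log A.card / Real.log b < s.re) :
    (∀ m : ℝ, 0 < m →
        Summable (fun l : ℤ => ‖FsTerm b (A.image fun a => b - 1 - a) s m l‖))
    ∧ ∀ m : ℝ, 0 < m →
        Fs b (A.image fun a => b - 1 - a) s ((b : ℝ) * m)
          = Fs b (A.image fun a => b - 1 - a) s m :=
  Fs_periodic_general b hb A hbA s hs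
end
end
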